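/- arXiv:1801.02745 — 4 statements merged into one kernel-verified Lean document; each statement's English description precedes it below -/
import Mathlib

section
/- For every q ∈ (0,1) and every real x > 0, D_KL(Poi_x ‖ Y^(q)) = log S(q) − x·log q − x·E₁(x). -/
/-- `ψ(y) = −γ + Σ_{k=1}^{y−1} 1/k` for a positive integer `y`. -/
noncomputable def psi (y : ℕ) : ℝ :=
  -Real.eulerMascheroniConstant + ∑ k ∈ Finset.Icc 1 (y - 1), (1 : ℝ) / k

/-- `g(0) = 0` and `g(y) = y·ψ(y)` for `y ≥ 1`. -/
noncomputable def g (y : ℕ) : ℝ := y * psi y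

/-- The normalizing sum `S(q) = Σ_{y=0}^∞ e^{g(y)}·(q/e)^y / y!` of the digamma distribution. -/
noncomputable def S (q : ℝ) : ℝ :=
  ∑' y : ℕ, Real.exp (g y) * (q / Real.exp 1) ^ y / Nat.factorial y

/-- The pmf of the digamma distribution: `Y^(q)(y) = e^{g(y)}·(q/e)^y / (y!·S(q))`. -/
noncomputable def digammaPMF (q : ℝ) (y : ℕ) : ℝ :=
  Real.exp (g y) * (q / Real.exp 1) ^ y / (Nat.factorial y * S q)

/-- The pmf of the Poisson distribution with mean `l`. -/
noncomputable def poissonPMF (l : ℝ) (y : ℕ) : ℝ := Real.exp (-l) * l ^ y / Nat.factorial y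

/-- Kullback–Leibler divergence between distributions on ℕ:
`D_KL(P‖Q) = Σ_y P(y)·log(P(y)/Q(y))`. -/
noncomputable def klDivPMF (P Q : ℕ → ℝ) : ℝ := ∑' y : ℕ, P y * Real.log (P y / Q y)

/-- The exponential integral `E₁(x) = ∫_1^∞ e^{−xt}/t dt`. -/
noncomputable def E1 (x : ℝ) : ℝ := ∫ t in Set.Ioi (1 : ℝ), Real.exp (-(x * t)) / t

/-!
Since `log (Poi_x(y) / Y^(q)(y)) = log S(q) - x + y (log x - log q + 1) - g(y)`, the divergence
reduces to the Poisson moments `E[Y] = x` and `E[g(Y)]` (the normalizer is finite because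
`g(y) ≤ y log y`, which bounds its terms by `q^y`). The Poisson identity
`E[Y f(Y)] = x E[f(Y+1)]` and `ψ(y+1) = -γ + H_y` give `E[g(Y)] = x (-γ + E[H_Y])`. Writing
`H_y = ∫₀¹ (1 - (1-u)^y)/u du` and using the generating function `E[(1-u)^Y] = e^{-xu}` gives
`E[H_Y] = Ein(x) = ∫₀^x (1 - e^{-s})/s ds`. Finally `Ein(x) = log x + γ + E₁(x)`: the
difference `Ein(x) - log x - E₁(x)` does not depend on `x`, and its value at `x = 1` is `γ`, by
integrating `Γ'(1) = ∫₀^∞ e^{-t} log t dt = -γ` by parts on `(0,1]` and on `[1,∞)`.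
-/

open Real MeasureTheory Set Filter Topology

lemma hasSum_poissonPMF_mul_pow (x c : ℝ) :
    HasSum (fun y => poissonPMF x y * c ^ y) (exp (x * (c - 1))) := by
  have h := (NormedSpace.expSeries_div_hasSum_exp (x * c)).mul_left (exp (-x))
  rw [← exp_eq_exp_ℝ, ← exp_add, neg_add_eq_sub, ← mul_sub_one] at h
  have hfun : (fun y => poissonPMF x y * c ^ y)
      = fun y => exp (-x) * ((x * c) ^ y / y.factorial) := by
    funext y
    rw [poissonPMF, mul_pow]
    ring
  rwa [hfun]

lemma hasSum_poissonPMF (x : ℝ) : HasSum (poissonPMF x) 1 := by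
  simpa using hasSum_poissonPMF_mul_pow x 1

lemma poissonPMF_nonneg {x : ℝ} (hx : 0 ≤ x) (y : ℕ) : 0 ≤ poissonPMF x y := by
  unfold poissonPMF
  positivity

lemma poissonPMF_succ_mul (x : ℝ) (y : ℕ) :
    poissonPMF x (y + 1) * (y + 1) = x * poissonPMF x y := by
  unfold poissonPMF
  rw [Nat.factorial_succ]
  push_cast
  field_simp
  ring

lemma HasSum.poissonPMF_mul_nat_mul {x a : ℝ} {f : ℕ → ℝ}
    (h : HasSum (fun y => poissonPMF x y * f (y + 1)) a) :
    HasSum (fun y => poissonPMF x y * (y * f y)) (x * a) := by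
  rw [← hasSum_nat_add_iff' 1, Finset.sum_range_one, Nat.cast_zero, zero_mul, mul_zero, sub_zero]
  have hfun : (fun y : ℕ => poissonPMF x (y + 1) * (((y + 1 : ℕ) : ℝ) * f (y + 1)))
      = fun y => x * (poissonPMF x y * f (y + 1)) := by
    funext y
    rw [← mul_assoc x, ← poissonPMF_succ_mul]
    push_cast
    ring
  rw [hfun]
  exact h.mul_left x

lemma hasSum_poissonPMF_mul_nat (x : ℝ) : HasSum (fun y : ℕ => poissonPMF x y * y) x := by
  have h := HasSum.poissonPMF_mul_nat_mul (f := fun _ => 1) (x := x) (a := 1)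
    (by simpa only [mul_one] using hasSum_poissonPMF x)
  simpa only [mul_one] using h

lemma one_sub_one_sub_pow_div_eq_sum {u : ℝ} (hu : u ≠ 0) (n : ℕ) :
    (1 - (1 - u) ^ n) / u = ∑ j ∈ Finset.range n, (1 - u) ^ j := by
  have h := geom_sum_mul (1 - u) n
  field_simp
  linarith

lemma harmonic_eq_integral (n : ℕ) :
    (harmonic n : ℝ) = ∫ u in (0:ℝ)..1, (1 - (1 - u) ^ n) / u := by
  have hsum : ∫ u in (0:ℝ)..1, (1 - (1 - u) ^ n) / u
      = ∫ u in (0:ℝ)..1, ∑ j ∈ Finset.range n, (1 - u) ^ j := by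
    refine intervalIntegral.integral_congr_ae (Eventually.of_forall fun u hu => ?_)
    rw [uIoc_of_le zero_le_one] at hu
    exact one_sub_one_sub_pow_div_eq_sum hu.1.ne' n
  have hint (j : ℕ) : IntervalIntegrable (fun u : ℝ => (1 - u) ^ j) volume 0 1 :=
    (by fun_prop : Continuous fun u : ℝ => (1 - u) ^ j).intervalIntegrable _ _
  rw [hsum, intervalIntegral.integral_finsetSum fun j _ => hint j, harmonic]
  push_cast
  refine Finset.sum_congr rfl fun j _ => ?_
  rw [intervalIntegral.integral_comp_sub_left (fun u => u ^ j), integral_pow]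
  simp

lemma one_sub_one_sub_pow_div_mem_Icc {u : ℝ} (hu : u ∈ Ioc (0:ℝ) 1) (n : ℕ) :
    (1 - (1 - u) ^ n) / u ∈ Icc 0 (n : ℝ) := by
  obtain ⟨hu0, hu1⟩ := hu
  constructor
  · exact div_nonneg (sub_nonneg.2 (pow_le_one₀ (by linarith) (by linarith))) hu0.le
  · rw [div_le_iff₀ hu0]
    have := one_add_mul_le_pow (a := -u) (by linarith) n
    rw [← sub_eq_add_neg] at this
    linarith

lemma hasSum_poissonPMF_mul_harmonic {x : ℝ} (hx : 0 ≤ x) :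
    HasSum (fun y => poissonPMF x y * harmonic y)
      (∫ u in (0:ℝ)..1, (1 - exp (-(x * u))) / u) := by
  have hF : (fun y => poissonPMF x y * harmonic y)
      = fun y => ∫ u in (0:ℝ)..1, poissonPMF x y * ((1 - (1 - u) ^ y) / u) := by
    funext y
    rw [intervalIntegral.integral_const_mul, harmonic_eq_integral]
  rw [hF]
  refine intervalIntegral.hasSum_integral_of_dominated_convergence
    (fun y _ => poissonPMF x y * y) (fun y => (by fun_prop : Measurable fun u : ℝ =>
      poissonPMF x y * ((1 - (1 - u) ^ y) / u)).aestronglyMeasurable) (fun y => ?_)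
    (Eventually.of_forall fun _ _ => (hasSum_poissonPMF_mul_nat x).summable)
    intervalIntegrable_const (Eventually.of_forall fun u hu => ?_)
  · refine Eventually.of_forall fun u hu => ?_
    rw [uIoc_of_le zero_le_one] at hu
    have hmem := one_sub_one_sub_pow_div_mem_Icc hu y
    rw [Real.norm_of_nonneg (mul_nonneg (poissonPMF_nonneg hx y) hmem.1)]
    exact mul_le_mul_of_nonneg_left hmem.2 (poissonPMF_nonneg hx y)
  · rw [uIoc_of_le zero_le_one] at hu
    have h := ((hasSum_poissonPMF x).sub (hasSum_poissonPMF_mul_pow x (1 - u))).div_const u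
    simpa only [sub_sub_cancel_left, mul_neg, ← mul_one_sub, mul_div_assoc] using h

noncomputable def Ein (x : ℝ) : ℝ := ∫ s in (0:ℝ)..x, (1 - exp (-s)) / s

lemma integral_one_sub_exp_neg_mul_div {x : ℝ} (hx : 0 < x) :
    ∫ u in (0:ℝ)..1, (1 - exp (-(x * u))) / u = Ein x := by
  have h := intervalIntegral.integral_comp_mul_left (fun s => (1 - exp (-s)) / s)
    (a := 0) (b := 1) hx.ne'
  rw [mul_zero, mul_one] at h
  rw [Ein, ← mul_inv_cancel_left₀ hx.ne' (∫ s in (0:ℝ)..x, (1 - exp (-s)) / s),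
    ← smul_eq_mul x⁻¹, ← h, ← intervalIntegral.integral_const_mul]
  refine intervalIntegral.integral_congr fun u _ => ?_
  rcases eq_or_ne u 0 with rfl | hu
  · simp
  · field_simp

lemma E1_eq_integral_Ioi {x : ℝ} (hx : 0 < x) : E1 x = ∫ s in Ioi x, exp (-s) / s := by
  have h := integral_comp_mul_left_Ioi (fun s => exp (-s) / s) 1 hx
  rw [mul_one] at h
  rw [E1, ← mul_inv_cancel_left₀ hx.ne' (∫ s in Ioi x, exp (-s) / s), ← smul_eq_mul x⁻¹,
    ← h, ← integral_const_mul]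
  refine setIntegral_congr_fun measurableSet_Ioi fun t ht => ?_
  have ht0 : t ≠ 0 := (zero_lt_one.trans ht).ne'
  field_simp

lemma norm_one_sub_exp_neg_div_le_one {s : ℝ} (hs : 0 ≤ s) :
    ‖(1 - exp (-s)) / s‖ ≤ 1 := by
  rcases hs.eq_or_lt with rfl | hs
  · simp
  rw [Real.norm_of_nonneg (div_nonneg (sub_nonneg.2 (exp_le_one_iff.2 (by linarith))) hs.le),
    div_le_one hs]
  linarith [add_one_le_exp (-s)]

lemma intervalIntegrable_one_sub_exp_neg_div {a b : ℝ} (ha : 0 ≤ a) (hb : 0 ≤ b) :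
    IntervalIntegrable (fun s => (1 - exp (-s)) / s) volume a b := by
  refine (intervalIntegrable_const (c := (1:ℝ))).mono_fun'
    (by fun_prop : Measurable fun s : ℝ => (1 - exp (-s)) / s).aestronglyMeasurable ?_
  rw [EventuallyLE, ae_restrict_iff' measurableSet_uIoc]
  exact Eventually.of_forall fun s hs =>
    norm_one_sub_exp_neg_div_le_one ((le_min ha hb).trans hs.1.le)

lemma integrableOn_exp_neg_div_Ioi {a : ℝ} (ha : 0 < a) :
    IntegrableOn (fun s => exp (-s) / s) (Ioi a) := by
  refine ((exp_neg_integrableOn_Ioi a one_pos).const_mul a⁻¹).mono'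
    (by fun_prop : Measurable fun s : ℝ => exp (-s) / s).aestronglyMeasurable ?_
  rw [ae_restrict_iff' measurableSet_Ioi]
  refine Eventually.of_forall fun s (hs : a < s) => ?_
  have hs0 : 0 < s := ha.trans hs
  rw [Real.norm_of_nonneg (by positivity), neg_one_mul, div_eq_inv_mul]
  exact mul_le_mul_of_nonneg_right (inv_anti₀ ha hs.le) (exp_nonneg _)

lemma Ein_sub_log_sub_integral_Ioi {x : ℝ} (hx : 0 < x) :
    Ein x - log x - ∫ s in Ioi x, exp (-s) / s = Ein 1 - ∫ s in Ioi 1, exp (-s) / s := by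
  have hne : ∀ s ∈ uIcc 1 x, s ≠ 0 := fun s hs =>
    ((lt_min one_pos hx).trans_le hs.1).ne'
  have hEin : Ein x - Ein 1 = log x - ∫ s in (1:ℝ)..x, exp (-s) / s := by
    rw [Ein, Ein, intervalIntegral.integral_interval_sub_left
      (intervalIntegrable_one_sub_exp_neg_div le_rfl hx.le)
      (intervalIntegrable_one_sub_exp_neg_div le_rfl zero_le_one)]
    have hsplit : ∀ s ∈ uIcc 1 x, (1 - exp (-s)) / s = s⁻¹ - exp (-s) / s := fun s _ => by
      rw [sub_div, one_div]
    have hinv : IntervalIntegrable (fun s : ℝ => s⁻¹) volume 1 x :=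
      intervalIntegral.intervalIntegrable_inv hne continuousOn_id
    have hexp : IntervalIntegrable (fun s => exp (-s) / s) volume 1 x :=
      ContinuousOn.intervalIntegrable (by fun_prop (disch := assumption))
    rw [intervalIntegral.integral_congr hsplit, intervalIntegral.integral_sub hinv hexp,
      integral_inv_of_pos one_pos hx, div_one]
  have hIoi := intervalIntegral.integral_Ioi_sub_Ioi' (integrableOn_exp_neg_div_Ioi one_pos)
    (integrableOn_exp_neg_div_Ioi hx)
  linarith

lemma integral_log_mul_exp_neg :
    ∫ t in Ioi (0:ℝ), log t * exp (-t) = -eulerMascheroniConstant := by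
  have hderiv := Complex.hasDerivAt_GammaIntegral (s := 1) (by norm_num)
  have hval : ∫ t : ℝ in Ioi 0, (t : ℂ) ^ ((1 : ℂ) - 1) * (log t * exp (-t))
      = ((∫ t in Ioi (0:ℝ), log t * exp (-t) : ℝ) : ℂ) := by
    rw [← integral_complex_ofReal]
    refine setIntegral_congr_fun measurableSet_Ioi fun t _ => ?_
    simp
  rw [hval, ← Complex.ofReal_one] at hderiv
  have hreal : HasDerivAt Gamma (∫ t in Ioi (0:ℝ), log t * exp (-t)) 1 := by
    have h := hderiv.real_of_complex
    rw [Complex.ofReal_re] at h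
    refine h.congr_of_eventuallyEq ?_
    filter_upwards [Ioi_mem_nhds one_pos] with x hx
    rw [← Complex.Gamma_eq_integral (by simpa using hx), Complex.Gamma_ofReal, Complex.ofReal_re]
  exact hreal.unique hasDerivAt_Gamma_one

lemma integrableOn_exp_neg_mul_log_Ioc : IntegrableOn (fun t => exp (-t) * log t) (Ioc 0 1) := by
  have hlog : IntegrableOn log (Ioc 0 1) :=
    (intervalIntegrable_iff_integrableOn_Ioc_of_le zero_le_one).1
      intervalIntegral.intervalIntegrable_log'
  refine hlog.bdd_mul (c := 1) (by fun_prop : Continuous fun t => exp (-t)).aestronglyMeasurable ?_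
  rw [ae_restrict_iff' measurableSet_Ioc]
  refine Eventually.of_forall fun t ht => ?_
  rw [Real.norm_of_nonneg (exp_nonneg _), exp_le_one_iff, neg_nonpos]
  exact ht.1.le

lemma integrableOn_exp_neg_mul_log_Ioi : IntegrableOn (fun t => exp (-t) * log t) (Ioi 1) := by
  have hGamma : IntegrableOn (fun t => exp (-t) * t) (Ioi 1) := by
    refine ((GammaIntegral_convergent two_pos).mono_set (Ioi_subset_Ioi zero_le_one)).congr_fun
      (fun t _ => ?_) measurableSet_Ioi
    norm_num
  refine hGamma.mono' (by fun_prop : Measurable fun t => exp (-t) * log t).aestronglyMeasurable ?_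
  rw [ae_restrict_iff' measurableSet_Ioi]
  refine Eventually.of_forall fun t (ht : 1 < t) => ?_
  rw [Real.norm_of_nonneg (mul_nonneg (exp_nonneg _) (log_nonneg ht.le))]
  exact mul_le_mul_of_nonneg_left (log_le_self (zero_le_one.trans ht.le)) (exp_nonneg _)

lemma integral_exp_neg_mul_log_zero_one : ∫ t in (0:ℝ)..1, exp (-t) * log t = -Ein 1 := by
  let F : ℝ → ℝ := fun t => (1 - exp (-t)) * log t
  have hderiv : ∀ t ∈ Ioo (0:ℝ) 1,
      HasDerivAt F (exp (-t) * log t + (1 - exp (-t)) / t) t := fun t ht =>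
    (((hasDerivAt_neg t).exp.const_sub 1).mul (hasDerivAt_log ht.1.ne')).congr_deriv (by ring)
  have hint : IntervalIntegrable (fun t => exp (-t) * log t) volume 0 1 :=
    (intervalIntegrable_iff_integrableOn_Ioc_of_le zero_le_one).2
      integrableOn_exp_neg_mul_log_Ioc
  have hF0 : Tendsto F (𝓝[>] 0) (𝓝 0) := by
    have hmul : Tendsto (fun t => t * log t) (𝓝[>] 0) (𝓝 0) := by
      simpa using continuous_mul_log.tendsto 0 |>.mono_left nhdsWithin_le_nhds
    refine squeeze_zero_norm' ?_ (by simpa using hmul.norm)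
    filter_upwards [self_mem_nhdsWithin] with t (ht : 0 < t)
    have hexp : exp (-t) ≤ 1 := exp_le_one_iff.2 (neg_nonpos.2 ht.le)
    rw [norm_mul, Real.norm_of_nonneg (sub_nonneg.2 hexp), abs_of_pos ht, Real.norm_eq_abs]
    gcongr
    linarith [add_one_le_exp (-t)]
  have hF1 : Tendsto F (𝓝[<] 1) (𝓝 0) := by
    have h : ContinuousAt F 1 := by fun_prop (disch := norm_num)
    simpa [F] using h.tendsto.mono_left nhdsWithin_le_nhds
  have h := intervalIntegral.integral_eq_sub_of_hasDerivAt_of_tendsto zero_lt_one hderiv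
    (hint.add (intervalIntegrable_one_sub_exp_neg_div le_rfl zero_le_one)) hF0 hF1
  rw [intervalIntegral.integral_add hint
    (intervalIntegrable_one_sub_exp_neg_div le_rfl zero_le_one), sub_zero] at h
  rw [Ein]
  linarith

lemma integral_exp_neg_mul_log_Ioi_one :
    ∫ t in Ioi 1, exp (-t) * log t = ∫ t in Ioi 1, exp (-t) / t := by
  let G : ℝ → ℝ := fun t => -(exp (-t) * log t)
  have hderiv : ∀ t ∈ Ici (1:ℝ), HasDerivAt G (exp (-t) * log t - exp (-t) / t) t :=
    fun t ht => ((hasDerivAt_neg t).exp.mul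
      (hasDerivAt_log (zero_lt_one.trans_le ht).ne')).neg.congr_deriv (by ring)
  have hG : Tendsto G atTop (𝓝 0) := by
    refine squeeze_zero_norm' ?_ (tendsto_pow_mul_exp_neg_atTop_nhds_zero 1)
    filter_upwards [eventually_ge_atTop 1] with t ht
    rw [norm_neg, Real.norm_of_nonneg (mul_nonneg (exp_nonneg _) (log_nonneg ht)), pow_one,
      mul_comm t]
    exact mul_le_mul_of_nonneg_left (log_le_self (zero_le_one.trans ht)) (exp_nonneg _)
  have h := integral_Ioi_of_hasDerivAt_of_tendsto' hderiv
    (integrableOn_exp_neg_mul_log_Ioi.sub (integrableOn_exp_neg_div_Ioi one_pos)) hG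
  rw [integral_sub integrableOn_exp_neg_mul_log_Ioi (integrableOn_exp_neg_div_Ioi one_pos)] at h
  simp only [G, log_one, mul_zero, neg_zero, sub_zero] at h
  linarith

lemma eulerMascheroniConstant_eq_Ein_one_sub :
    eulerMascheroniConstant = Ein 1 - ∫ s in Ioi 1, exp (-s) / s := by
  have hint : IntegrableOn (fun t => exp (-t) * log t) (Ioi 0) := by
    rw [← Ioc_union_Ioi_eq_Ioi zero_le_one]
    exact integrableOn_exp_neg_mul_log_Ioc.union integrableOn_exp_neg_mul_log_Ioi
  have hγ : ∫ t in Ioi 0, exp (-t) * log t = -eulerMascheroniConstant := by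
    simp_rw [mul_comm (exp _)]
    exact integral_log_mul_exp_neg
  have h := intervalIntegral.integral_interval_add_Ioi hint integrableOn_exp_neg_mul_log_Ioi
  rw [integral_exp_neg_mul_log_zero_one, integral_exp_neg_mul_log_Ioi_one, hγ] at h
  linarith

lemma Ein_eq_log_add_eulerMascheroniConstant_add {x : ℝ} (hx : 0 < x) :
    Ein x = log x + eulerMascheroniConstant + ∫ s in Ioi x, exp (-s) / s := by
  linarith [Ein_sub_log_sub_integral_Ioi hx, eulerMascheroniConstant_eq_Ein_one_sub]

lemma psi_add_one (y : ℕ) : psi (y + 1) = -eulerMascheroniConstant + harmonic y := by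
  rw [psi, harmonic_eq_sum_Icc, Nat.add_sub_cancel]
  push_cast
  simp only [one_div]

lemma hasSum_poissonPMF_mul_g {x : ℝ} (hx : 0 < x) :
    HasSum (fun y => poissonPMF x y * g y) (x * (log x + E1 x)) := by
  have hpsi :
      HasSum (fun y => poissonPMF x y * psi (y + 1)) (-eulerMascheroniConstant + Ein x) := by
    simp only [psi_add_one, mul_add]
    rw [← integral_one_sub_exp_neg_mul_div hx]
    simpa only [one_mul] using
      ((hasSum_poissonPMF x).mul_right _).add (hasSum_poissonPMF_mul_harmonic hx.le)
  rw [Ein_eq_log_add_eulerMascheroniConstant_add hx, ← E1_eq_integral_Ioi hx,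
    show -eulerMascheroniConstant + (log x + eulerMascheroniConstant + E1 x) = log x + E1 x by
      ring] at hpsi
  exact hpsi.poissonPMF_mul_nat_mul

lemma g_le_mul_log (y : ℕ) : g y ≤ y * log y := by
  cases y with
  | zero => simp [g]
  | succ n =>
    have h := eulerMascheroniSeq_lt_eulerMascheroniConstant n
    rw [eulerMascheroniSeq] at h
    rw [g, psi_add_one]
    push_cast
    exact mul_le_mul_of_nonneg_left (by linarith) (by positivity)

lemma exp_g_le_pow_self (y : ℕ) : exp (g y) ≤ (y : ℝ) ^ y := by
  rcases Nat.eq_zero_or_pos y with rfl | hy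
  · simp [g]
  calc exp (g y) ≤ exp (log ((y : ℝ) ^ y)) := by
        rw [log_pow]
        exact exp_le_exp.2 (g_le_mul_log y)
    _ = (y : ℝ) ^ y := exp_log (by positivity)

lemma S_summand_le_pow {q : ℝ} (hq : 0 ≤ q) (y : ℕ) :
    exp (g y) * (q / exp 1) ^ y / y.factorial ≤ q ^ y := by
  calc exp (g y) * (q / exp 1) ^ y / y.factorial
      = exp (g y) / y.factorial * exp (-y) * q ^ y := by
        rw [div_pow, ← exp_nat_mul, mul_one, exp_neg]
        ring
    _ ≤ (y : ℝ) ^ y / y.factorial * exp (-y) * q ^ y := by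
        gcongr
        exact exp_g_le_pow_self y
    _ ≤ exp y * exp (-y) * q ^ y := by
        gcongr
        exact pow_div_factorial_le_exp _ y.cast_nonneg y
    _ = q ^ y := by rw [← exp_add, add_neg_cancel, exp_zero, one_mul]

lemma one_le_S {q : ℝ} (hq0 : 0 ≤ q) (hq1 : q < 1) : 1 ≤ S q := by
  have hsum : Summable fun y => exp (g y) * (q / exp 1) ^ y / y.factorial :=
    Summable.of_nonneg_of_le (fun y => by positivity) (S_summand_le_pow hq0)
      (summable_geometric_of_lt_one hq0 hq1)
  calc 1 = exp (g 0) * (q / exp 1) ^ 0 / (Nat.factorial 0) := by simp [g]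
    _ ≤ S q := hsum.le_tsum 0 fun y _ => by positivity

lemma log_poissonPMF_div_digammaPMF {x q : ℝ} (hx : 0 < x) (hq : 0 < q) (hS : 0 < S q)
    (y : ℕ) :
    log (poissonPMF x y / digammaPMF q y) = log (S q) - x + y * (log x - log q + 1) - g y := by
  have hP : poissonPMF x y = exp (-x + y * log x) / y.factorial := by
    rw [poissonPMF, exp_add, exp_nat_mul, exp_log hx]
  have hQ : digammaPMF q y = exp (g y + y * (log q - 1)) / (y.factorial * S q) := by
    rw [digammaPMF, exp_add, exp_nat_mul, exp_sub, exp_log hq]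
  have hratio : poissonPMF x y / digammaPMF q y
      = exp (-x + y * log x - (g y + y * (log q - 1))) * S q := by
    rw [hP, hQ, exp_sub]
    field_simp
  rw [hratio, log_mul (exp_pos _).ne' hS.ne', log_exp]
  ring

/-- For every `q ∈ (0,1)` and every `x > 0`,
`D_KL(Poi_x ‖ Y^(q)) = log S(q) − x·log q − x·E₁(x)`. -/
theorem stmt1 (q x : ℝ) (hq : q ∈ Set.Ioo (0 : ℝ) 1) (hx : 0 < x) :
    klDivPMF (poissonPMF x) (digammaPMF q)
      = Real.log (S q) - x * Real.log q - x * E1 x := by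
  obtain ⟨hq0, hq1⟩ := hq
  have hS : 0 < S q := zero_lt_one.trans_le (one_le_S hq0.le hq1)
  have hsum := (((hasSum_poissonPMF x).mul_left (log (S q) - x)).add
    ((hasSum_poissonPMF_mul_nat x).mul_left (log x - log q + 1))).sub (hasSum_poissonPMF_mul_g hx)
  have hterm : (fun y => poissonPMF x y * log (poissonPMF x y / digammaPMF q y))
      = fun y => (log (S q) - x) * poissonPMF x y + (log x - log q + 1) * (poissonPMF x y * y)
        - poissonPMF x y * g y := by
    funext y
    rw [log_poissonPMF_div_digammaPMF hx hq0 hS]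
    ring
  rw [klDivPMF, hterm, hsum.tsum_eq]
  ring
end

section
/- For every q ∈ (0,1), log( 1 + (2/e^{1+γ})·(1/√(1−q) − 1) ) ≤ log S(q) ≤ log( 1 + (1/√(2e))·(1/√(1−q) − 1) ). -/
/-!
Write `S(q) = ∑ c_y q^y` with `c_y = e^{g(y) - y} / y!` and compare it with the binomial series
`1/√(1-q) = ∑ a_y q^y`, `a_y = C(2y, y) / 4^y`. For `y ≥ 1` the ratio `ρ_y = c_y / a_y` satisfies
`ρ_{y+1} / ρ_y = 2 e^{ψ(y+1)} / (2y+1) ≥ 1`, because `ψ(y+1) ≥ log (y + 1/2)`. Hence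
`2 / e^{1+γ} = ρ_1 ≤ ρ_y ≤ lim ρ = 1/√(2e)`, where the limit follows from Stirling's formula and
`y (ψ(y) - log y) → -1/2`. As `c_0 = a_0 = 1`, summing gives the bounds on `S(q)`.
-/

open Real Filter Topology Stirling

lemma two_div_two_mul_add_one_le_log_one_add_inv {a : ℝ} (ha : 0 < a) :
    2 / (2 * a + 1) ≤ log (1 + a⁻¹) := by
  simpa [div_eq_mul_inv] using le_hasSum (hasSum_log_one_add_inv ha) 0 (fun k _ ↦ by positivity)

/- With `x = 1/(2a+1)`, compare `log (1 + a⁻¹) = 2 ∑ x^(2k+1)/(2k+1)` termwise with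
`2 ∑ x^(2k+1) = 2x/(1-x²)`. -/
lemma log_one_add_inv_le {a : ℝ} (ha : 0 < a) :
    log (1 + a⁻¹) ≤ (a⁻¹ + (a + 1)⁻¹) / 2 := by
  set x := 1 / (2 * a + 1) with hx
  have hx1 : x ^ 2 < 1 := by
    rw [hx, div_pow, div_lt_one (by positivity)]
    nlinarith
  have hval : 2 * x * (1 - x ^ 2)⁻¹ = (a⁻¹ + (a + 1)⁻¹) / 2 := by
    have : 1 - x ^ 2 = 4 * a * (a + 1) / (2 * a + 1) ^ 2 := by
      rw [hx]; field_simp; ring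
    rw [this, hx]; field_simp; ring
  rw [← hval]
  refine hasSum_le (fun k ↦ ?_) (hasSum_log_one_add_inv ha)
    ((hasSum_geometric_of_lt_one (by positivity) hx1).mul_left (2 * x))
  have hk : 1 / (2 * (k : ℝ) + 1) ≤ 1 := by
    rw [div_le_one (by positivity)]
    linarith [(k.cast_nonneg : (0 : ℝ) ≤ k)]
  rw [← pow_mul, mul_assoc 2 x, ← pow_succ', mul_assoc]
  gcongr
  exact mul_le_of_le_one_left (by positivity) hk

lemma log_add_one_eq_log_add_log_one_add_inv {a : ℝ} (ha : 0 < a) :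
    log (a + 1) = log a + log (1 + a⁻¹) := by
  rw [← log_mul ha.ne' (by positivity), mul_add, mul_inv_cancel₀ ha.ne', mul_one]

lemma eulerMascheroniConstant_le_harmonic_sub_log_add_half (n : ℕ) :
    eulerMascheroniConstant ≤ harmonic n - log (n + 1 / 2) := by
  have hanti : Antitone (fun n : ℕ ↦ (harmonic n : ℝ) - log (n + 1 / 2)) := by
    refine antitone_nat_of_succ_le fun n ↦ ?_
    have hpos : (0 : ℝ) < n + 1 / 2 := by positivity
    have hlog := two_div_two_mul_add_one_le_log_one_add_inv hpos
    have hstep : ((n + 1 : ℕ) : ℝ) + 1 / 2 = (n + 1 / 2) + 1 := by push_cast; ring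
    have hinv : 2 / (2 * ((n : ℝ) + 1 / 2) + 1) = ((n + 1 : ℕ) : ℝ)⁻¹ := by
      push_cast; field_simp; ring
    rw [hstep, log_add_one_eq_log_add_log_one_add_inv hpos, harmonic_succ]
    push_cast at hinv ⊢
    linarith
  have hlim : Tendsto (fun n : ℕ ↦ (harmonic n : ℝ) - log (n + 1 / 2)) atTop
      (𝓝 eulerMascheroniConstant) := by
    refine tendsto_of_tendsto_of_tendsto_of_le_of_le' tendsto_harmonic_sub_log_add_one
      tendsto_harmonic_sub_log (.of_forall fun n ↦ ?_) ?_
    · gcongr; norm_num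
    · filter_upwards [eventually_ge_atTop 1] with n hn
      gcongr
      norm_num
  exact hanti.le_of_tendsto hlim n

lemma harmonic_sub_log_sub_le {n : ℕ} (hn : n ≠ 0) :
    harmonic n - log n - 1 / (2 * n) ≤ eulerMascheroniConstant := by
  set u : ℕ → ℝ := fun n ↦ harmonic (n + 1) - log (n + 1 : ℕ) - 1 / (2 * (n + 1 : ℕ))
  have hmono : Monotone u := by
    refine monotone_nat_of_le_succ fun n ↦ ?_
    have hpos : (0 : ℝ) < n + 1 := by positivity
    have hlog := log_one_add_inv_le hpos
    have hsplit : ((n : ℝ) + 1 + 1)⁻¹ - 1 / (2 * (n + 1 + 1)) + 1 / (2 * (n + 1))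
        = (((n : ℝ) + 1)⁻¹ + ((n : ℝ) + 1 + 1)⁻¹) / 2 := by field_simp; ring
    simp only [u, harmonic_succ (n + 1)]
    push_cast
    rw [log_add_one_eq_log_add_log_one_add_inv hpos]
    linarith
  have hlim : Tendsto u atTop (𝓝 eulerMascheroniConstant) := by
    have h := (tendsto_harmonic_sub_log.comp (tendsto_add_atTop_nat 1)).sub
      ((tendsto_one_div_atTop_nhds_zero_nat.comp (tendsto_add_atTop_nat 1)).const_mul (1 / 2))
    simp only [mul_zero, sub_zero] at h
    refine h.congr fun n ↦ ?_
    simp only [u, Function.comp_apply]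
    push_cast
    field_simp
  obtain ⟨m, rfl⟩ := Nat.exists_eq_add_one_of_ne_zero hn
  exact hmono.ge_of_tendsto hlim m

lemma psi_succ (n : ℕ) : psi (n + 1) = harmonic n - eulerMascheroniConstant := by
  simp [psi, harmonic_eq_sum_Icc, neg_add_eq_sub]

lemma log_add_half_le_psi_succ (n : ℕ) : log (n + 1 / 2) ≤ psi (n + 1) := by
  linarith [psi_succ n, eulerMascheroniConstant_le_harmonic_sub_log_add_half n]

lemma psi_le_log_sub {n : ℕ} (hn : n ≠ 0) : psi n ≤ log n - 1 / (2 * n) := by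
  obtain ⟨m, rfl⟩ := Nat.exists_eq_add_one_of_ne_zero hn
  have h := harmonic_sub_log_sub_le hn
  have hsplit : ((m : ℝ) + 1)⁻¹ = 1 / (2 * (m + 1)) + 1 / (2 * (m + 1)) := by
    field_simp; norm_num
  rw [harmonic_succ] at h
  rw [psi_succ]
  push_cast at h ⊢
  linarith

lemma tendsto_mul_psi_sub_log :
    Tendsto (fun n : ℕ ↦ n * (psi n - log n)) atTop (𝓝 (-1 / 2)) := by
  refine tendsto_of_tendsto_of_tendsto_of_le_of_le'
    ((tendsto_mul_log_one_add_div_atTop (-1 / 2)).comp tendsto_natCast_atTop_atTop)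
    tendsto_const_nhds ?_ ?_
  · filter_upwards [eventually_ne_atTop 0] with n hn
    obtain ⟨m, rfl⟩ := Nat.exists_eq_add_one_of_ne_zero hn
    have hm : (0 : ℝ) < m + 1 := by positivity
    have hlog : log (1 + (-1 / 2) / ((m : ℝ) + 1)) = log (m + 1 / 2) - log (m + 1) := by
      rw [← log_div (by positivity) hm.ne']
      congr 1
      field_simp
      ring
    simp only [Function.comp_apply]
    push_cast
    rw [hlog]
    gcongr
    linarith [log_add_half_le_psi_succ m]
  · filter_upwards [eventually_ne_atTop 0] with n hn
    calc (n : ℝ) * (psi n - log n) ≤ n * (log n - 1 / (2 * n) - log n) := by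
          gcongr; exact psi_le_log_sub hn
      _ = -1 / 2 := by field_simp; ring

noncomputable def invSqrtCoeff (n : ℕ) : ℝ := n.centralBinom / 4 ^ n

lemma invSqrtCoeff_pos (n : ℕ) : 0 < invSqrtCoeff n := by
  unfold invSqrtCoeff
  have := n.centralBinom_pos
  positivity

lemma invSqrtCoeff_succ (n : ℕ) :
    invSqrtCoeff (n + 1) = invSqrtCoeff n * ((2 * n + 1) / (2 * (n + 1))) := by
  have h : ((n : ℝ) + 1) * (n + 1).centralBinom = 2 * (2 * n + 1) * n.centralBinom := by
    exact_mod_cast Nat.succ_mul_centralBinom_succ n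
  rw [invSqrtCoeff, invSqrtCoeff, pow_succ]
  field_simp
  linear_combination 2 * h

lemma ascPochhammer_eval_half_mul_four_pow (n : ℕ) :
    (ascPochhammer ℝ n).eval (1 / 2) * 4 ^ n = n.centralBinom * n.factorial := by
  induction n with
  | zero => simp
  | succ n ih =>
    have h : ((n : ℝ) + 1) * (n + 1).centralBinom = 2 * (2 * n + 1) * n.centralBinom := by
      exact_mod_cast Nat.succ_mul_centralBinom_succ n
    rw [ascPochhammer_succ_eval, Nat.factorial_succ, pow_succ]
    push_cast
    linear_combination (2 * (2 * n + 1)) * ih - n.factorial * h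

lemma choose_half_add_sub_one_eq_invSqrtCoeff (n : ℕ) :
    Ring.choose ((1 / 2 : ℝ) + n - 1) n = invSqrtCoeff n := by
  have h := Ring.factorial_nsmul_multichoose_eq_ascPochhammer (1 / 2 : ℝ) n
  rw [Ring.multichoose_eq, Polynomial.ascPochhammer_smeval_eq_eval, nsmul_eq_mul] at h
  have h4 := ascPochhammer_eval_half_mul_four_pow n
  rw [← h] at h4
  rw [invSqrtCoeff, eq_div_iff (by positivity)]
  refine mul_left_cancel₀ (by positivity : (n.factorial : ℝ) ≠ 0) ?_
  linear_combination h4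

lemma hasSum_invSqrtCoeff_mul_pow {q : ℝ} (hq : |q| < 1) :
    HasSum (fun n ↦ invSqrtCoeff n * q ^ n) (1 / √(1 - q)) := by
  have h := (one_div_one_sub_rpow_hasFPowerSeriesOnBall_zero (1 / 2)).hasSum
    (y := q) (by simpa [enorm_eq_nnnorm, ← NNReal.coe_lt_one] using hq)
  simp only [FormalMultilinearSeries.ofScalars_apply_eq, smul_eq_mul,
    choose_half_add_sub_one_eq_invSqrtCoeff, zero_add] at h
  rwa [sqrt_eq_rpow]

noncomputable def digammaCoeff (y : ℕ) : ℝ := exp (g y - y) / y.factorial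

lemma S_eq_tsum_digammaCoeff_mul_pow (q : ℝ) : S q = ∑' y, digammaCoeff y * q ^ y := by
  refine tsum_congr fun y ↦ ?_
  rw [digammaCoeff, div_pow, exp_one_pow, exp_sub]
  field_simp

lemma digammaCoeff_succ {y : ℕ} (hy : y ≠ 0) :
    digammaCoeff (y + 1) = digammaCoeff y * exp (psi (y + 1)) / (y + 1) := by
  obtain ⟨m, rfl⟩ := Nat.exists_eq_add_one_of_ne_zero hy
  have hg : g (m + 1 + 1) - (m + 1 + 1 : ℕ) = (g (m + 1) - (m + 1 : ℕ)) + psi (m + 1 + 1) := by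
    rw [g, g, psi_succ, psi_succ, harmonic_succ]
    push_cast
    field_simp
    ring
  rw [digammaCoeff, digammaCoeff, hg, exp_add, Nat.factorial_succ]
  push_cast
  field_simp

noncomputable def coeffRatio (y : ℕ) : ℝ := digammaCoeff y / invSqrtCoeff y

lemma coeffRatio_pos (y : ℕ) : 0 < coeffRatio y := by
  unfold coeffRatio digammaCoeff
  have := invSqrtCoeff_pos y
  positivity

lemma digammaCoeff_eq_coeffRatio_mul (y : ℕ) : digammaCoeff y = coeffRatio y * invSqrtCoeff y :=
  (div_mul_cancel₀ _ (invSqrtCoeff_pos y).ne').symm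

lemma coeffRatio_one : coeffRatio 1 = 2 / exp (1 + eulerMascheroniConstant) := by
  rw [div_eq_mul_inv, ← exp_neg]
  simp [coeffRatio, digammaCoeff, invSqrtCoeff, g, psi, Nat.centralBinom]
  ring_nf

lemma coeffRatio_succ {y : ℕ} (hy : y ≠ 0) :
    coeffRatio (y + 1) = coeffRatio y * (2 * exp (psi (y + 1)) / (2 * y + 1)) := by
  have := (invSqrtCoeff_pos y).ne'
  rw [coeffRatio, coeffRatio, digammaCoeff_succ hy, invSqrtCoeff_succ]
  field_simp

lemma monotone_coeffRatio_succ : Monotone (fun n ↦ coeffRatio (n + 1)) := by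
  refine monotone_nat_of_le_succ fun n ↦ ?_
  rw [coeffRatio_succ n.succ_ne_zero]
  refine le_mul_of_one_le_right (coeffRatio_pos _).le ?_
  rw [one_le_div (by positivity)]
  have := exp_le_exp.2 (log_add_half_le_psi_succ (n + 1))
  rw [exp_log (by positivity)] at this
  push_cast at this ⊢
  linarith

lemma factorial_eq_stirlingSeq_mul {n : ℕ} (hn : n ≠ 0) :
    (n.factorial : ℝ) = stirlingSeq n * (√(2 * n) * (n / exp 1) ^ n) := by
  rw [stirlingSeq, div_mul_cancel₀]
  positivity

lemma coeffRatio_eq_stirlingSeq {y : ℕ} (hy : y ≠ 0) :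
    coeffRatio y = exp (y * (psi y - log y)) * stirlingSeq y / (stirlingSeq (2 * y) * √2) := by
  have hcb : (y.centralBinom : ℝ) * y.factorial * y.factorial = (2 * y).factorial := by
    have h := Nat.choose_mul_factorial_mul_factorial (by omega : y ≤ 2 * y)
    rw [show 2 * y - y = y by omega] at h
    rw [Nat.centralBinom_eq_two_mul_choose]
    exact_mod_cast h
  have hE : exp (g y - y) = exp (y * (psi y - log y)) * (y / exp 1 : ℝ) ^ y := by
    have hy' : (0 : ℝ) < y := by positivity
    rw [← exp_log (by positivity : (0 : ℝ) < (y / exp 1) ^ y), log_pow,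
      log_div hy'.ne' (exp_ne_zero 1), log_exp, ← exp_add, g]
    ring_nf
  have hP2 : ((2 * y : ℕ) / exp 1 : ℝ) ^ (2 * y) = 4 ^ y * ((y / exp 1 : ℝ) ^ y) ^ 2 := by
    push_cast
    rw [show (4 : ℝ) = 2 ^ 2 by norm_num, ← pow_mul]
    ring
  have hsqrt : √(2 * ((2 * y : ℕ) : ℝ)) = √2 * √(2 * y) := by
    push_cast
    rw [← sqrt_mul zero_le_two]
  have h1 := factorial_eq_stirlingSeq_mul hy
  have h2 := factorial_eq_stirlingSeq_mul (by omega : 2 * y ≠ 0)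
  rw [hP2, hsqrt, ← hcb, h1] at h2
  have hs1 := (sqrt_pos.2 pi_pos).trans_le (sqrt_pi_le_stirlingSeq hy)
  have hs2 := (sqrt_pos.2 pi_pos).trans_le (sqrt_pi_le_stirlingSeq (by omega : 2 * y ≠ 0))
  have hr : 0 < √(2 * (y : ℝ)) * ((y / exp 1 : ℝ) ^ y) ^ 2 := by positivity
  have := y.centralBinom_pos
  rw [coeffRatio, digammaCoeff, invSqrtCoeff, hE, h1]
  field_simp
  rw [mul_comm (y : ℝ) 2]
  refine mul_right_cancel₀ hr.ne' ?_
  linear_combination -h2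

lemma tendsto_coeffRatio : Tendsto coeffRatio atTop (𝓝 (1 / √(2 * exp 1))) := by
  have hlim : Tendsto (fun y : ℕ ↦ exp (y * (psi y - log y)) * stirlingSeq y /
      (stirlingSeq (2 * y) * √2)) atTop (𝓝 (exp (-1 / 2) * √π / (√π * √2))) :=
    (((continuous_exp.tendsto _).comp tendsto_mul_psi_sub_log).mul
      tendsto_stirlingSeq_sqrt_pi).div
      ((tendsto_stirlingSeq_sqrt_pi.comp (tendsto_id.const_mul_atTop' two_pos)).mul_const _)
      (by positivity)
  have hval : exp (-1 / 2) * √π / (√π * √2) = 1 / √(2 * exp 1) := by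
    rw [sqrt_mul zero_le_two, ← exp_half, neg_div, exp_neg]
    field_simp
  rw [← hval]
  refine hlim.congr' ?_
  filter_upwards [eventually_ne_atTop 0] with y hy
  exact (coeffRatio_eq_stirlingSeq hy).symm

lemma coeffRatio_succ_le (n : ℕ) : coeffRatio (n + 1) ≤ 1 / √(2 * exp 1) :=
  monotone_coeffRatio_succ.ge_of_tendsto (tendsto_coeffRatio.comp (tendsto_add_atTop_nat 1)) n

lemma tsum_bounds_of_tail_comparison {a c : ℕ → ℝ} {A lo hi : ℝ} (ha : HasSum a A)
    (h0 : c 0 = a 0) (hc : ∀ n, 0 ≤ c (n + 1)) (hlo : ∀ n, lo * a (n + 1) ≤ c (n + 1))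
    (hhi : ∀ n, c (n + 1) ≤ hi * a (n + 1)) :
    a 0 + lo * (A - a 0) ≤ ∑' n, c n ∧ ∑' n, c n ≤ a 0 + hi * (A - a 0) := by
  have ha' : HasSum (fun n ↦ a (n + 1)) (A - a 0) := by
    simpa using (hasSum_nat_add_iff' 1).2 ha
  have hc' : Summable (fun n ↦ c (n + 1)) :=
    (ha'.summable.mul_left hi).of_nonneg_of_le hc hhi
  rw [((summable_nat_add_iff 1).1 hc').tsum_eq_zero_add, h0]
  exact ⟨by linarith [hasSum_le hlo (ha'.mul_left lo) hc'.hasSum],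
    by linarith [hasSum_le hhi hc'.hasSum (ha'.mul_left hi)]⟩

lemma S_bounds {q : ℝ} (hq0 : 0 ≤ q) (hq1 : q < 1) :
    1 + 2 / exp (1 + eulerMascheroniConstant) * (1 / √(1 - q) - 1) ≤ S q ∧
      S q ≤ 1 + 1 / √(2 * exp 1) * (1 / √(1 - q) - 1) := by
  have hA := hasSum_invSqrtCoeff_mul_pow (abs_lt.2 ⟨by linarith, hq1⟩)
  have hterm (n : ℕ) : 0 ≤ invSqrtCoeff (n + 1) * q ^ (n + 1) :=
    mul_nonneg (invSqrtCoeff_pos _).le (by positivity)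
  have h := tsum_bounds_of_tail_comparison (c := fun n ↦ digammaCoeff n * q ^ n)
    (lo := 2 / exp (1 + eulerMascheroniConstant)) (hi := 1 / √(2 * exp 1)) hA
    (by simp [digammaCoeff, invSqrtCoeff, g])
    (fun n ↦ by unfold digammaCoeff; positivity)
    (fun n ↦ by
      rw [digammaCoeff_eq_coeffRatio_mul, mul_assoc, ← coeffRatio_one]
      exact mul_le_mul_of_nonneg_right (monotone_coeffRatio_succ (Nat.zero_le n)) (hterm n))
    (fun n ↦ by
      rw [digammaCoeff_eq_coeffRatio_mul, mul_assoc]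
      exact mul_le_mul_of_nonneg_right (coeffRatio_succ_le n) (hterm n))
  simpa [invSqrtCoeff, ← S_eq_tsum_digammaCoeff_mul_pow] using h

/-- For every `q ∈ (0,1)`,
`log(1 + (2/e^{1+γ})·(1/√(1−q) − 1)) ≤ log S(q) ≤ log(1 + (1/√(2e))·(1/√(1−q) − 1))`. -/
theorem stmt4 (q : ℝ) (hq : q ∈ Set.Ioo (0 : ℝ) 1) :
    Real.log (1 + (2 / Real.exp (1 + Real.eulerMascheroniConstant)) *
        (1 / Real.sqrt (1 - q) - 1)) ≤ Real.log (S q) ∧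
      Real.log (S q) ≤
        Real.log (1 + (1 / Real.sqrt (2 * Real.exp 1)) * (1 / Real.sqrt (1 - q) - 1)) := by
  obtain ⟨hq0, hq1⟩ := hq
  obtain ⟨hlo, hhi⟩ := S_bounds hq0.le hq1
  have hA : 1 ≤ 1 / √(1 - q) :=
    one_le_one_div (sqrt_pos.2 (by linarith)) (sqrt_le_one.2 (by linarith))
  have hpos : 0 < 1 + 2 / exp (1 + eulerMascheroniConstant) * (1 / √(1 - q) - 1) := by
    have := mul_nonneg (by positivity : (0 : ℝ) ≤ 2 / exp (1 + eulerMascheroniConstant))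
      (sub_nonneg.2 hA)
    linarith
  exact ⟨log_le_log hpos hlo, log_le_log (hpos.trans_le hlo) hhi⟩
end

section
/- For every μ > 0 there exists q* ∈ (0,1) such that f(μ, q*) < m(μ). -/
/-!
At `q₀ = 2μ/(1+2μ)` the two bounds coincide: `m(μ) = f(μ, q₀)`. There
`∂f/∂q = (1+2μ)/2 · (1/(1 + (√(2e)-1)/√(1+2μ)) - 1)`, which is negative because `√(2e) > 1`.
So `q₀` is not a local minimum of `f(μ, ·)`, and some `q` near `q₀` beats `m(μ)`.
-/

noncomputable def fbound (μ q : ℝ) : ℝ :=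
  -μ * Real.log q +
    Real.log (1 + (1 / Real.sqrt (2 * Real.exp 1)) * (1 / Real.sqrt (1 - q) - 1))

noncomputable def mbound (μ : ℝ) : ℝ :=
  (μ + 1 / 2) * Real.log (μ + 1 / 2) - μ * Real.log μ - 1 / 2 +
    Real.log (1 + (Real.sqrt (2 * Real.exp 1) - 1) / Real.sqrt (1 + 2 * μ))

open Real Filter Topology

lemma one_lt_sqrt_two_mul_exp_one : 1 < √(2 * exp 1) := by
  rw [Real.lt_sqrt zero_le_one]
  linarith [Real.add_one_le_exp 1]

lemma log_sqrt_two_mul_exp_one : log √(2 * exp 1) = (log 2 + 1) / 2 := by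
  rw [log_sqrt (by positivity), log_mul two_ne_zero (exp_pos 1).ne', log_exp]

lemma exists_lt_of_hasDerivAt_ne_zero {f : ℝ → ℝ} {f' x : ℝ} {s : Set ℝ}
    (hs : s ∈ 𝓝 x) (hf : HasDerivAt f f' x) (hf' : f' ≠ 0) : ∃ y ∈ s, f y < f x := by
  have hmin : ¬IsLocalMin f x := fun h => hf' (h.hasDerivAt_eq_zero hf)
  obtain ⟨y, hy, hys⟩ := ((not_eventually.mp hmin).and_eventually hs).exists
  exact ⟨y, hys, not_le.mp hy⟩

noncomputable def fboundDeriv (μ q : ℝ) : ℝ :=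
  -μ / q + 1 / (2 * (1 - q) * (1 + (√(2 * exp 1) - 1) * √(1 - q)))

lemma hasDerivAt_fbound (μ : ℝ) {q : ℝ} (hq₀ : 0 < q) (hq₁ : q < 1) :
    HasDerivAt (fbound μ) (fboundDeriv μ q) q := by
  have hc : 0 < √(2 * exp 1) := by positivity
  set c := √(2 * exp 1)
  have ht : 0 < √(1 - q) := sqrt_pos.mpr (by linarith)
  have hsqrt : HasDerivAt (fun q => √(1 - q)) (-1 / (2 * √(1 - q))) q := by
    simpa using ((hasDerivAt_id q).const_sub 1).sqrt (by simp; linarith)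
  have hinner : HasDerivAt (fun q => 1 + 1 / c * (1 / √(1 - q) - 1))
      (1 / c * (-(-1 / (2 * √(1 - q))) / √(1 - q) ^ 2)) q := by
    simpa [one_div] using (((hsqrt.inv ht.ne').sub_const 1).const_mul (1 / c)).const_add 1
  have hpos : 0 < 1 + 1 / c * (1 / √(1 - q) - 1) := by
    have : 1 ≤ 1 / √(1 - q) := by
      rw [le_div_iff₀ ht, one_mul, sqrt_le_one]; linarith
    have : 0 < 1 / c := by positivity
    nlinarith
  refine (((hasDerivAt_log hq₀.ne').const_mul (-μ)).add (hinner.log hpos.ne')).congr_deriv ?_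
  rw [fboundDeriv, sq_sqrt (by linarith : (0:ℝ) ≤ 1 - q)]
  field_simp
  ring

lemma mbound_eq_fbound {μ : ℝ} (hμ : 0 < μ) : mbound μ = fbound μ (2 * μ / (1 + 2 * μ)) := by
  have hc := one_lt_sqrt_two_mul_exp_one
  have hs : 0 < √(1 + 2 * μ) := sqrt_pos.mpr (by linarith)
  have hsqrt : √(1 - 2 * μ / (1 + 2 * μ)) = 1 / √(1 + 2 * μ) := by
    rw [show 1 - 2 * μ / (1 + 2 * μ) = 1 / (1 + 2 * μ) by field_simp; ring, one_div, sqrt_inv,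
      one_div]
  set c := √(2 * exp 1) with hc_def
  set s := √(1 + 2 * μ) with hs_def
  have hlog_s : log (1 + 2 * μ) = 2 * log s := by
    rw [hs_def, log_sqrt (by linarith)]; ring
  have e₁ : log (μ + 1 / 2) = 2 * log s - log 2 := by
    rw [show μ + 1 / 2 = (1 + 2 * μ) / 2 by ring, log_div (by linarith) two_ne_zero, hlog_s]
  have e₂ : log (2 * μ / (1 + 2 * μ)) = log 2 + log μ - 2 * log s := by
    rw [log_div (by positivity) (by linarith), log_mul two_ne_zero hμ.ne', hlog_s]
  have e₃ : log (1 + (c - 1) / s) = log (c + s - 1) - log s := by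
    rw [show 1 + (c - 1) / s = (c + s - 1) / s by field_simp; ring,
      log_div (by linarith) hs.ne']
  have e₄ : log (1 + 1 / c * (1 / (1 / s) - 1)) = log (c + s - 1) - log c := by
    rw [show 1 + 1 / c * (1 / (1 / s) - 1) = (c + s - 1) / c by field_simp; ring,
      log_div (by linarith) (by linarith)]
  rw [mbound, fbound, hsqrt, e₁, e₂, e₃, e₄, hc_def, log_sqrt_two_mul_exp_one]
  ring

lemma fboundDeriv_neg {μ : ℝ} (hμ : 0 < μ) : fboundDeriv μ (2 * μ / (1 + 2 * μ)) < 0 := by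
  have hc := one_lt_sqrt_two_mul_exp_one
  have ht : 0 < √(1 - 2 * μ / (1 + 2 * μ)) := sqrt_pos.mpr (by
    rw [sub_pos, div_lt_one (by linarith)]; linarith)
  set d := 1 + (√(2 * exp 1) - 1) * √(1 - 2 * μ / (1 + 2 * μ))
  have hd : 1 < d := by nlinarith
  have h₁ : -μ / (2 * μ / (1 + 2 * μ)) = -((1 + 2 * μ) / 2) := by field_simp
  have h₂ : 1 / (2 * (1 - 2 * μ / (1 + 2 * μ)) * d) = (1 + 2 * μ) / 2 / d := by
    field_simp; ring
  rw [fboundDeriv, h₁, h₂]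
  linarith [div_lt_self (by linarith : 0 < (1 + 2 * μ) / 2) hd]

/-- For every `μ > 0` there exists `q* ∈ (0,1)` such that `f(μ, q*) < m(μ)`. -/
theorem stmt9 (μ : ℝ) (hμ : 0 < μ) : ∃ q ∈ Set.Ioo (0 : ℝ) 1, fbound μ q < mbound μ := by
  have hq₀ : 0 < 2 * μ / (1 + 2 * μ) := by positivity
  have hq₁ : 2 * μ / (1 + 2 * μ) < 1 := by rw [div_lt_one (by linarith)]; linarith
  rw [mbound_eq_fbound hμ]
  exact exists_lt_of_hasDerivAt_ne_zero (Ioo_mem_nhds hq₀ hq₁)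
    (hasDerivAt_fbound μ hq₀ hq₁) (fboundDeriv_neg hμ).ne
end

section
/- Let λ ≥ 0 and x ≥ 0 with λ + x > 0, let q > 0 and y₀ > 0, and let h : ℕ → ℝ be such that Y(y) = y₀·e^{h(y)}·(q/e)^y / y! defines a probability distribution on ℕ and Σ_{y=0}^∞ Poi_{λ+x}(y)·|h(y)| < ∞. Then D_KL(Poi_{λ+x} ‖ Y) = −log y₀ − (λ+x)·log q + (λ+x)·log(λ+x) − e^{−(λ+x)}·G(λ+x), where G(z) = Σ_{i=0}^∞ h(i)·z^i / i! is the exponential generating function of h. -/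
/-!
Since `Y` has the same `1 / y!` factor as the Poisson pmf, the log-ratio
`log (Poi_m(y) / Y(y)) = -m - log y₀ - h(y) + y·(log m - log q + 1)` is affine in `y` up to the
term `h(y)`. Integrating it against `Poi_m`, whose total mass is `1` and whose mean is `m`, gives
the formula; the `h`-term integrates to `e^{-m}·G(m)` because `Poi_m(y) = e^{-m}·m^y / y!`.
-/

open Real

lemma poissonPMF_pos {l : ℝ} (hl : 0 < l) (y : ℕ) : 0 < poissonPMF l y := by
  unfold poissonPMF; positivity

lemma poissonPMF_eq_exp_mul (l : ℝ) (y : ℕ) :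
    poissonPMF l y = exp (-l) * (l ^ y / y.factorial) := by
  unfold poissonPMF; ring

lemma summable_poissonPMF (l : ℝ) : Summable (poissonPMF l) := by
  simpa only [← poissonPMF_eq_exp_mul] using (summable_pow_div_factorial l).mul_left (exp (-l))

lemma tsum_poissonPMF (l : ℝ) : ∑' y, poissonPMF l y = 1 := by
  rw [tsum_congr (poissonPMF_eq_exp_mul l), tsum_mul_left, ← congrFun NormedSpace.exp_eq_tsum_div l,
    ← exp_eq_exp_ℝ, ← exp_add, neg_add_cancel, exp_zero]

lemma succ_mul_poissonPMF_succ (l : ℝ) (n : ℕ) :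
    ((n + 1 : ℕ) : ℝ) * poissonPMF l (n + 1) = l * poissonPMF l n := by
  unfold poissonPMF
  rw [Nat.factorial_succ]
  push_cast
  field_simp
  ring

lemma summable_natCast_mul_poissonPMF (l : ℝ) :
    Summable fun y : ℕ => (y : ℝ) * poissonPMF l y := by
  refine (summable_nat_add_iff 1).mp ?_
  simpa only [succ_mul_poissonPMF_succ] using (summable_poissonPMF l).mul_left l

lemma tsum_natCast_mul_poissonPMF (l : ℝ) : ∑' y : ℕ, (y : ℝ) * poissonPMF l y = l := by
  rw [(summable_natCast_mul_poissonPMF l).tsum_eq_zero_add]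
  simp_rw [succ_mul_poissonPMF_succ, tsum_mul_left, tsum_poissonPMF]
  simp

lemma tsum_poissonPMF_mul (l : ℝ) (f : ℕ → ℝ) :
    ∑' y, poissonPMF l y * f y = exp (-l) * ∑' i : ℕ, f i * l ^ i / i.factorial := by
  rw [← tsum_mul_left]
  congr 1 with y
  rw [poissonPMF_eq_exp_mul]
  ring

lemma log_poissonPMF_div {l : ℝ} (hl : 0 < l) {q y0 : ℝ} (hq : 0 < q) (hy0 : 0 < y0) (a : ℝ) (y : ℕ) :
    log (poissonPMF l y / (y0 * exp a * (q / exp 1) ^ y / y.factorial)) =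
      -l - log y0 - a + y * (log l - log q + 1) := by
  have hratio : poissonPMF l y / (y0 * exp a * (q / exp 1) ^ y / y.factorial) =
      exp (-l - a + y) * (l / q) ^ y / y0 := by
    have hfac : (0 : ℝ) < y.factorial := by exact_mod_cast y.factorial_pos
    unfold poissonPMF
    rw [exp_add, exp_sub, div_pow, div_pow, ← exp_nat_mul, mul_one]
    field_simp
  rw [hratio, log_div (by positivity) hy0.ne', log_mul (by positivity) (by positivity), log_exp,
    log_pow, log_div hl.ne' hq.ne']
  ring

theorem stmt13_general (lam x q y0 : ℝ) (hpos : 0 < lam + x)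
    (hq : 0 < q) (hy0 : 0 < y0) (h : ℕ → ℝ) (Y : ℕ → ℝ)
    (hY : ∀ y : ℕ, Y y = y0 * Real.exp (h y) * (q / Real.exp 1) ^ y / Nat.factorial y)
    (hsum : Summable fun y : ℕ => poissonPMF (lam + x) y * |h y|) :
    klDivPMF (poissonPMF (lam + x)) Y =
      -Real.log y0 - (lam + x) * Real.log q + (lam + x) * Real.log (lam + x) -
        Real.exp (-(lam + x)) * ∑' i : ℕ, h i * (lam + x) ^ i / Nat.factorial i := by
  set m := lam + x
  have hsumH : Summable fun y => poissonPMF m y * h y :=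
    hsum.of_norm_bounded fun y => by
      rw [norm_mul, norm_of_nonneg (poissonPMF_pos hpos y).le, norm_eq_abs]
  have hsummand : ∀ y : ℕ, poissonPMF m y * log (poissonPMF m y / Y y) =
      (-m - log y0) * poissonPMF m y - poissonPMF m y * h y +
        (log m - log q + 1) * ((y : ℝ) * poissonPMF m y) := fun y => by
    rw [hY, log_poissonPMF_div hpos hq hy0]
    ring
  unfold klDivPMF
  simp_rw [hsummand]
  rw [((summable_poissonPMF m).mul_left _ |>.sub hsumH).tsum_add
      ((summable_natCast_mul_poissonPMF m).mul_left _),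
    ((summable_poissonPMF m).mul_left _).tsum_sub hsumH, tsum_mul_left, tsum_mul_left,
    tsum_poissonPMF, tsum_natCast_mul_poissonPMF, tsum_poissonPMF_mul]
  ring

/-- Let `λ ≥ 0`, `x ≥ 0` with `λ + x > 0`, let `q > 0` and `y₀ > 0`, and let `h : ℕ → ℝ` be
such that `Y(y) = y₀·e^{h(y)}·(q/e)^y / y!` defines a probability distribution on ℕ and
`Σ_y Poi_{λ+x}(y)·|h(y)| < ∞`. Then
`D_KL(Poi_{λ+x} ‖ Y) = −log y₀ − (λ+x)·log q + (λ+x)·log(λ+x) − e^{−(λ+x)}·G(λ+x)`,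
where `G(z) = Σ_i h(i)·z^i / i!`. -/
theorem stmt13 (lam x q y0 : ℝ) (hlam : 0 ≤ lam) (hx : 0 ≤ x) (hpos : 0 < lam + x)
    (hq : 0 < q) (hy0 : 0 < y0) (h : ℕ → ℝ) (Y : ℕ → ℝ)
    (hY : ∀ y : ℕ, Y y = y0 * Real.exp (h y) * (q / Real.exp 1) ^ y / Nat.factorial y)
    (hprob : ∑' y : ℕ, Y y = 1)
    (hsum : Summable fun y : ℕ => poissonPMF (lam + x) y * |h y|) :
    klDivPMF (poissonPMF (lam + x)) Y =
      -Real.log y0 - (lam + x) * Real.log q + (lam + x) * Real.log (lam + x) -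
        Real.exp (-(lam + x)) * ∑' i : ℕ, h i * (lam + x) ^ i / Nat.factorial i :=
  stmt13_general lam x q y0 hpos hq hy0 h Y hY hsum
end
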